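/- Let J be an n×n real matrix with zero diagonal such that B = (I − J)^{-1} exists and is a P-matrix, and let f_i : X_i → R for i = 1,...,n. If x* ∈ Π X_i satisfies f_i(x*_i) ≥ f_i(x_i) for all x_i ∈ X_i and all i (each base utility is maximized), then x* is Pareto optimal for U(x) = B f(x): there is no x with U(x) ≥ U(x*) componentwise and U(x) ≠ U(x*). -/

import Mathlib

open Matrix Finset

def GenP {ι : Type*} [Fintype ι] [DecidableEq ι] (A : Matrix ι ι ℝ) : Prop :=
  ∀ S : Finset ι, 0 < (A.submatrix (fun i : S => (i : ι)) (fun j : S => (j : ι))).det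

lemma det_basis_rows {ι : Type*} [Fintype ι] [DecidableEq ι] (A : Matrix ι ι ℝ) (T : Finset ι) :
    (Matrix.of (T.piecewise (fun i => Pi.single i (1:ℝ)) (fun i => A i))).det
      = (A.submatrix (fun i : (Tᶜ : Finset ι) => (i : ι)) (fun j : (Tᶜ : Finset ι) => (j : ι))).det := by
  classical
  set e := Equiv.sumCompl (fun a => a ∈ T) with he
  rw [← Matrix.det_submatrix_equiv_self e]
  have hblock : (Matrix.of (T.piecewise (fun i => Pi.single i (1:ℝ)) (fun i => A i))).submatrix e e
      = Matrix.fromBlocks (1 : Matrix {a // a ∈ T} {a // a ∈ T} ℝ) 0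
          (Matrix.of fun (i : {a // ¬ a ∈ T}) (j : {a // a ∈ T}) => A (i : ι) (j : ι))
          (A.submatrix (fun i : {a // ¬ a ∈ T} => (i : ι)) (fun j : {a // ¬ a ∈ T} => (j : ι))) := by
    ext i j
    cases i with
    | inl i =>
      cases j with
      | inl j =>
        simp only [Matrix.submatrix_apply, he, Equiv.sumCompl_apply_inl, Matrix.fromBlocks_apply₁₁,
          Matrix.of_apply]
        rw [Finset.piecewise_eq_of_mem _ _ _ i.2]
        rw [Pi.single_apply, Matrix.one_apply]
        by_cases h : i = j
        · subst h; simp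
        · rw [if_neg h, if_neg (fun h' => h (Subtype.ext h'.symm))]
      | inr j =>
        have hji : (j : ι) ≠ (i : ι) := fun h => j.2 (h ▸ i.2)
        simp [Matrix.submatrix_apply, he, Finset.piecewise_eq_of_mem _ _ _ i.2,
          Pi.single_apply, hji]
    | inr i =>
      cases j with
      | inl j => simp [Matrix.submatrix_apply, he, Finset.piecewise_eq_of_notMem _ _ _ i.2]
      | inr j => simp [Matrix.submatrix_apply, he, Finset.piecewise_eq_of_notMem _ _ _ i.2]
  rw [hblock, Matrix.det_fromBlocks_zero₁₂, Matrix.det_one, one_mul]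
  let e2 : {x // x ∈ Tᶜ} ≃ {x // ¬ x ∈ T} :=
    Equiv.subtypeEquivRight (fun x => Finset.mem_compl)
  rw [← Matrix.det_submatrix_equiv_self e2]
  congr 1

lemma det_add_diagonal_pos {ι : Type*} [Fintype ι] [DecidableEq ι] {A : Matrix ι ι ℝ}
    (hA : GenP A) {d : ι → ℝ} (hd : ∀ i, 0 ≤ d i) : 0 < (A + Matrix.diagonal d).det := by
  classical
  have key : (A + Matrix.diagonal d).det
      = ∑ s : Finset ι, (∏ i ∈ s, d i) *
        (A.submatrix (fun i : (sᶜ : Finset ι) => (i : ι)) (fun j : (sᶜ : Finset ι) => (j : ι))).det := by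
    have h1 : (A + Matrix.diagonal d).det
        = (Matrix.detRowAlternating (R := ℝ) (n := ι)).toMultilinearMap
            ((fun i => Matrix.diagonal d i) + (fun i => A i)) := by
      rw [add_comm]; rfl
    rw [h1, MultilinearMap.map_add_univ]
    refine Finset.sum_congr rfl fun s _ => ?_
    set m : ι → (ι → ℝ) := s.piecewise (fun i => Pi.single i (1:ℝ)) (fun i => A i) with hm
    have hpw : s.piecewise (fun i => Matrix.diagonal d i) (fun i => A i)
        = s.piecewise (fun i => d i • m i) m := by
      funext i
      by_cases hi : i ∈ s
      · rw [Finset.piecewise_eq_of_mem _ _ _ hi, Finset.piecewise_eq_of_mem _ _ _ hi, hm,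
          Finset.piecewise_eq_of_mem _ _ _ hi]
        funext j
        simp [Matrix.diagonal_apply, Pi.single_apply, eq_comm]
      · rw [Finset.piecewise_eq_of_notMem _ _ _ hi, Finset.piecewise_eq_of_notMem _ _ _ hi,
          hm, Finset.piecewise_eq_of_notMem _ _ _ hi]
    rw [hpw, MultilinearMap.map_piecewise_smul]
    have hdet : (Matrix.detRowAlternating (R := ℝ) (n := ι)).toMultilinearMap m
        = (Matrix.of m).det := rfl
    rw [smul_eq_mul, hdet, hm, det_basis_rows]
  rw [key]
  refine Finset.sum_pos' (fun s _ => mul_nonneg (Finset.prod_nonneg fun i _ => hd i)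
    (le_of_lt (hA sᶜ))) ⟨∅, Finset.mem_univ _, ?_⟩
  simpa using hA (∅ᶜ : Finset ι)

lemma genP_submatrix {ι : Type*} [Fintype ι] [DecidableEq ι] {A : Matrix ι ι ℝ}
    (hA : GenP A) (S : Finset ι) :
    GenP (A.submatrix (fun i : S => (i : ι)) (fun j : S => (j : ι))) := by
  classical
  intro T
  rw [Matrix.submatrix_submatrix]
  set S' : Finset ι := T.map (Function.Embedding.subtype _) with hS'
  have hf : ∀ x : {x // x ∈ T}, ((x : {a // a ∈ S}) : ι) ∈ S' := fun x =>
    Finset.mem_map.2 ⟨x.1, x.2, rfl⟩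
  let f : {x // x ∈ T} → {y // y ∈ S'} := fun x => ⟨_, hf x⟩
  have hbij : Function.Bijective f := by
    constructor
    · intro a b h
      have h' := congrArg Subtype.val h
      exact Subtype.ext (Subtype.ext h')
    · intro y
      obtain ⟨a, ha, hay⟩ := Finset.mem_map.1 y.2
      exact ⟨⟨a, ha⟩, Subtype.ext hay⟩
  have hdet := Matrix.det_submatrix_equiv_self (Equiv.ofBijective f hbij)
      (A.submatrix (fun i : S' => (i : ι)) (fun j : S' => (j : ι)))
  rw [Matrix.submatrix_submatrix] at hdet
  have hcomp : ((fun i : S' => (i : ι)) ∘ (Equiv.ofBijective f hbij))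
      = ((fun i : S => (i : ι)) ∘ (fun i : T => (i : {x // x ∈ S}))) := rfl
  rw [hcomp] at hdet
  rw [hdet]
  exact hA S'

lemma sign_nonreversal {ι : Type*} [Fintype ι] [DecidableEq ι] {A : Matrix ι ι ℝ}
    (hA : GenP A) {y : ι → ℝ} (hy : y ≠ 0)
    (h : ∀ i, y i * A.mulVec y i ≤ 0) : False := by
  classical
  set S : Finset ι := Finset.univ.filter (fun i => y i ≠ 0) with hSdef
  have hymem : ∀ i : S, y (i : ι) ≠ 0 := fun i => (Finset.mem_filter.1 i.2).2
  obtain ⟨i0, hi0⟩ := Function.ne_iff.1 hy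
  have hi0S : i0 ∈ S := Finset.mem_filter.2 ⟨Finset.mem_univ _, hi0⟩
  set d : S → ℝ := fun i => -(A.mulVec y (i : ι) / y (i : ι)) with hd
  have hdnn : ∀ i, 0 ≤ d i := by
    intro i
    have h2 : A.mulVec y (i : ι) / y (i : ι)
        = (y (i : ι) * A.mulVec y (i : ι)) / (y (i : ι) * y (i : ι)) := by
      rw [mul_div_mul_left _ _ (hymem i)]
    have h3 := div_nonpos_of_nonpos_of_nonneg (h (i : ι)) (mul_self_nonneg (y (i : ι)))
    rw [hd]; dsimp only; rw [h2]; linarith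
  set M := A.submatrix (fun i : S => (i : ι)) (fun j : S => (j : ι)) + Matrix.diagonal d with hM
  have hker : M.mulVec (fun i : S => y (i : ι)) = 0 := by
    funext i
    have hsum : ∑ j : S, A (i : ι) (j : ι) * y (j : ι) = A.mulVec y (i : ι) := by
      rw [show A.mulVec y (i : ι) = ∑ j : ι, A (i : ι) j * y j from rfl]
      rw [Finset.sum_coe_sort S (fun j => A (i : ι) j * y j)]
      apply Finset.sum_subset (Finset.subset_univ S)
      intro j _ hj
      have hyj : y j = 0 := by
        by_contra hyj
        exact hj (Finset.mem_filter.2 ⟨Finset.mem_univ _, hyj⟩)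
      simp [hyj]
    have : M.mulVec (fun i : S => y (i : ι)) i
        = ∑ j : S, (A (i : ι) (j : ι) * y (j : ι) + (if i = j then d i else 0) * y (j : ι)) := by
      simp only [Matrix.mulVec, dotProduct, hM, Matrix.add_apply, Matrix.submatrix_apply,
        Matrix.diagonal_apply, add_mul]
    rw [this, Finset.sum_add_distrib, hsum]
    have h4 : ∑ j : S, (if i = j then d i else 0) * y (j : ι) = d i * y (i : ι) := by
      rw [Finset.sum_eq_single i]
      · simp
      · intro b _ hbi; simp [Ne.symm hbi]
      · intro hi; exact absurd (Finset.mem_univ i) hi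
    rw [h4, hd]
    dsimp only
    rw [neg_mul, div_mul_cancel₀ _ (hymem i)]
    simp
  have hdet0 : M.det = 0 := by
    rw [← Matrix.exists_mulVec_eq_zero_iff]
    refine ⟨fun i : S => y (i : ι), ?_, hker⟩
    intro h0
    exact hi0 (by simpa using congrFun h0 ⟨i0, hi0S⟩)
  have hpos : 0 < M.det := det_add_diagonal_pos (genP_submatrix hA S) hdnn
  linarith

/-- A square real matrix is a P-matrix if all of its principal minors are positive. -/
def IsPMatrix {n : ℕ} (A : Matrix (Fin n) (Fin n) ℝ) : Prop :=
  ∀ S : Finset (Fin n), S.Nonempty →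
    0 < (A.submatrix (fun i : S => (i : Fin n)) (fun j : S => (j : Fin n))).det

/-- If each base utility is maximized at x*, then x* is Pareto optimal for the induced
game U(x) = B f(x), where B = (I − J)⁻¹ is a P-matrix. -/
theorem base_maximizers_pareto_optimal {n : ℕ} (J : Matrix (Fin n) (Fin n) ℝ)
    (hdiag : ∀ i, J i i = 0) (hunit : IsUnit (1 - J).det)
    (hP : IsPMatrix (1 - J)⁻¹)
    (X : Fin n → Type*) (f : ∀ i, X i → ℝ) (xs : ∀ i, X i)
    (hmax : ∀ (i : Fin n) (xi : X i), f i xi ≤ f i (xs i)) :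
    ¬ ∃ x : ∀ i, X i,
        (∀ i, (1 - J)⁻¹.mulVec (fun j => f j (xs j)) i ≤
          (1 - J)⁻¹.mulVec (fun j => f j (x j)) i) ∧
        (fun i => (1 - J)⁻¹.mulVec (fun j => f j (x j)) i) ≠
          (fun i => (1 - J)⁻¹.mulVec (fun j => f j (xs j)) i) := by
  rintro ⟨x, hge, hne⟩
  set B := (1 - J)⁻¹ with hB
  have hgen : GenP B := by
    intro S
    rcases S.eq_empty_or_nonempty with rfl | hS
    · haveI : IsEmpty {x : Fin n // x ∈ (∅ : Finset (Fin n))} := ⟨fun x => absurd x.2 (Finset.notMem_empty _)⟩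
      simp [Matrix.det_isEmpty]
    · exact hP S hS
  set y : Fin n → ℝ := fun j => f j (x j) - f j (xs j) with hy
  have hyle : ∀ j, y j ≤ 0 := fun j => sub_nonpos.2 (hmax j (x j))
  have hsub : B.mulVec y
      = B.mulVec (fun j => f j (x j)) - B.mulVec (fun j => f j (xs j)) := by
    rw [← Matrix.mulVec_sub]; rfl
  have hBy : ∀ i, 0 ≤ B.mulVec y i := by
    intro i
    have := congrFun hsub i
    rw [this]
    exact sub_nonneg.2 (hge i)
  have hyne : y ≠ 0 := by
    intro h0
    apply hne
    have hfx : (fun j => f j (x j)) = fun j => f j (xs j) := by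
      funext j
      have h2 : f j (x j) - f j (xs j) = 0 := congrFun h0 j
      linarith
    funext i
    rw [hfx]
  exact sign_nonreversal hgen hyne (fun i => mul_nonpos_iff.2 (Or.inr ⟨hyle i, hBy i⟩))
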